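/- Define T_B(τ) = (27−8τ²)/(18−9τ²) − √((8τ²−9/2)² − 45/4)/(18−9τ²) and T̂_B(τ) = ((3−τ)/2)·T_B(τ). Then for √(9+3√5)/4 ≤ τ ≤ 1, T̂_B is monotonically decreasing, with T̂_B(1) = 2 and T̂_B(√(9+3√5)/4) = (30+2√5)/11 − (15+√5)√(9+3√5)/66. -/

import Mathlib

/-!
With `D(τ) = (8τ² - 9/2)² - 45/4`, rationalizing the numerator gives
`T_B(τ) = 40 / (27 - 8τ² + √D(τ))`, so
`T̂_B(τ) = 20 (3 - τ) / (27 - 8τ² + √D(τ))`. With `u = 8τ² - 9/2` the denominator is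
`45/2 - (u - √(u² - c²))` where `c = 3√5/2`, and `u - √(u² - c²) = c² / (u + √(u² - c²))`
decreases for `u ≥ c`. On the interval `u ≥ c` holds, so the numerator is positive and
decreasing while the denominator is positive and increasing.
-/

noncomputable def TB (τ : ℝ) : ℝ :=
  (27 - 8 * τ ^ 2) / (18 - 9 * τ ^ 2) -
    Real.sqrt ((8 * τ ^ 2 - 9 / 2) ^ 2 - 45 / 4) / (18 - 9 * τ ^ 2)

noncomputable def hatTB (τ : ℝ) : ℝ := ((3 - τ) / 2) * TB τ

lemma sub_sqrt_sq_sub_sq_antitoneOn {c : ℝ} (hc : 0 ≤ c) :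
    AntitoneOn (fun u => u - √(u ^ 2 - c ^ 2)) (Set.Ici c) := by
  intro u hu v hv huv
  simp only [Set.mem_Ici] at hu hv
  have hp := Real.sq_sqrt (by nlinarith : 0 ≤ u ^ 2 - c ^ 2)
  have hq := Real.sq_sqrt (by nlinarith : 0 ≤ v ^ 2 - c ^ 2)
  have hp_le : √(u ^ 2 - c ^ 2) ≤ u := (Real.sqrt_le_left (by linarith)).2 (by nlinarith)
  have hq_le : √(v ^ 2 - c ^ 2) ≤ v := (Real.sqrt_le_left (by linarith)).2 (by nlinarith)
  nlinarith [Real.sqrt_nonneg (u ^ 2 - c ^ 2), Real.sqrt_nonneg (v ^ 2 - c ^ 2)]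

lemma TB_eq_div {x : ℝ} (hD : 0 ≤ (8 * x ^ 2 - 9 / 2) ^ 2 - 45 / 4) (hx : x ^ 2 ≠ 2) :
    TB x = 40 / (27 - 8 * x ^ 2 + √((8 * x ^ 2 - 9 / 2) ^ 2 - 45 / 4)) := by
  set s := √((8 * x ^ 2 - 9 / 2) ^ 2 - 45 / 4)
  have hs : s ^ 2 = (8 * x ^ 2 - 9 / 2) ^ 2 - 45 / 4 := Real.sq_sqrt hD
  have hden : 18 - 9 * x ^ 2 ≠ 0 := fun h => hx (by linarith)
  have hprod : (27 - 8 * x ^ 2 - s) * (27 - 8 * x ^ 2 + s) = 40 * (18 - 9 * x ^ 2) := by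
    linear_combination -hs
  have hplus : 27 - 8 * x ^ 2 + s ≠ 0 := by
    intro h; rw [h, mul_zero] at hprod; exact hden (by linarith)
  rw [TB, ← sub_div, div_eq_div_iff hden hplus]
  linear_combination hprod

local notation "τ₀" => √(9 + 3 * √5) / 4

lemma sq_tau0 : τ₀ ^ 2 = (9 + 3 * √5) / 16 := by
  rw [div_pow, Real.sq_sqrt (by positivity)]
  norm_num

lemma tau0_le_one : τ₀ ≤ 1 := by
  have h5 := Real.sq_sqrt (show (0 : ℝ) ≤ 5 by norm_num)
  have h : τ₀ ^ 2 ≤ 1 ^ 2 := by rw [sq_tau0]; nlinarith [Real.sqrt_nonneg 5]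
  exact (pow_le_pow_iff_left₀ (by positivity) zero_le_one two_ne_zero).1 h

lemma three_sqrt5_div_two_le_of_tau0_le {x : ℝ} (hx : τ₀ ≤ x) : 3 * √5 / 2 ≤ 8 * x ^ 2 - 9 / 2 := by
  have : τ₀ ^ 2 ≤ x ^ 2 := pow_le_pow_left₀ (by positivity) hx 2
  rw [sq_tau0] at this
  linarith

lemma sq_three_sqrt5_div_two : (3 * √5 / 2) ^ 2 = 45 / 4 := by
  rw [div_pow, mul_pow, Real.sq_sqrt (by norm_num)]
  norm_num

lemma denom_monotoneOn :
    MonotoneOn (fun x => 27 - 8 * x ^ 2 + √((8 * x ^ 2 - 9 / 2) ^ 2 - 45 / 4)) (Set.Ici τ₀) := by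
  intro a ha b hb hab
  have hu : 8 * a ^ 2 - 9 / 2 ≤ 8 * b ^ 2 - 9 / 2 := by
    have : a ^ 2 ≤ b ^ 2 := pow_le_pow_left₀ ((by positivity : (0 : ℝ) ≤ τ₀).trans ha) hab 2
    linarith
  have hφ := sub_sqrt_sq_sub_sq_antitoneOn (by positivity) (three_sqrt5_div_two_le_of_tau0_le ha)
    (three_sqrt5_div_two_le_of_tau0_le hb) hu
  rw [sq_three_sqrt5_div_two] at hφ
  show 27 - 8 * a ^ 2 + _ ≤ 27 - 8 * b ^ 2 + _
  linarith

lemma sq_le_one_of_mem {x : ℝ} (hx : x ∈ Set.Icc τ₀ 1) : x ^ 2 ≤ 1 :=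
  pow_le_one₀ ((by positivity : (0 : ℝ) ≤ τ₀).trans hx.1) hx.2

lemma hatTB_eq_div {x : ℝ} (hx : x ∈ Set.Icc τ₀ 1) :
    hatTB x = 20 * (3 - x) / (27 - 8 * x ^ 2 + √((8 * x ^ 2 - 9 / 2) ^ 2 - 45 / 4)) := by
  have hD : 0 ≤ (8 * x ^ 2 - 9 / 2) ^ 2 - 45 / 4 := by
    rw [← sq_three_sqrt5_div_two, sub_nonneg]
    exact pow_le_pow_left₀ (by positivity) (three_sqrt5_div_two_le_of_tau0_le hx.1) 2
  have hx2 : x ^ 2 ≠ 2 := ((sq_le_one_of_mem hx).trans_lt one_lt_two).ne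
  rw [hatTB, TB_eq_div hD hx2]
  ring

/-- On `[√(9+3√5)/4, 1]`, `T̂_B` is monotonically decreasing, `T̂_B(1) = 2` and
`T̂_B(√(9+3√5)/4) = (30+2√5)/11 − (15+√5)√(9+3√5)/66`. -/
theorem stmt_16 :
    AntitoneOn hatTB (Set.Icc (Real.sqrt (9 + 3 * Real.sqrt 5) / 4) 1) ∧
    hatTB 1 = 2 ∧
    hatTB (Real.sqrt (9 + 3 * Real.sqrt 5) / 4) =
      (30 + 2 * Real.sqrt 5) / 11 -
        (15 + Real.sqrt 5) * Real.sqrt (9 + 3 * Real.sqrt 5) / 66 := by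
  refine ⟨fun a ha b hb hab => ?_, ?_, ?_⟩
  · rw [hatTB_eq_div ha, hatTB_eq_div hb]
    refine div_le_div₀ (by linarith [ha.2]) (by linarith) ?_ (denom_monotoneOn ha.1 hb.1 hab)
    linarith [sq_le_one_of_mem ha, Real.sqrt_nonneg ((8 * a ^ 2 - 9 / 2) ^ 2 - 45 / 4)]
  · rw [hatTB_eq_div ⟨tau0_le_one, le_rfl⟩]
    norm_num
  · rw [hatTB_eq_div ⟨le_rfl, tau0_le_one⟩, sq_tau0]
    have h5 := Real.sq_sqrt (show (0 : ℝ) ≤ 5 by norm_num)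
    have hD : (8 * ((9 + 3 * √5) / 16) - 9 / 2) ^ 2 - 45 / 4 = 0 := by linear_combination 9 / 4 * h5
    rw [hD, Real.sqrt_zero, div_eq_iff (by nlinarith [Real.sqrt_nonneg 5])]
    linear_combination (3 / 11 - √(9 + 3 * √5) / 44) * h5
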